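/- Let π be a partition of a set of positive integers with {1} as a block, and let T be a π-increasing tree whose vertex set contains 1 and has at least two elements, with maximum vertex M. Then the blocks {1} and π^M (the block containing M) lie in different connected components of the M-dependence graph G_M(T); in particular, T is reducible. -/

import Mathlib

open scoped Classical

/-- An unordered increasing tree on a finite set of positive integers,
given by its vertex set and parent function: the root is the minimum vertex
and is fixed by `parent`, and every nonroot vertex has a parent in the tree
with strictly smaller label (so labels increase away from the root). -/
structure ITree : Type where
  verts : Finset ℕ
  parent : ℕ → ℕ
  pos : ∀ v ∈ verts, 0 < v
  parent_root : ∀ v ∈ verts, (∀ u ∈ verts, v ≤ u) → parent v = v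
  parent_lt : ∀ v ∈ verts, ¬(∀ u ∈ verts, v ≤ u) → parent v ∈ verts ∧ parent v < v

/-- `a` is an ancestor of `v` in `T` (this includes `a = v`): some iterate of
the parent function sends `v` to `a`. -/
def Ancestor (T : ITree) (a v : ℕ) : Prop := ∃ k : ℕ, T.parent^[k] v = a

/-- The chain from the root of `T` to `v`: the set of ancestors of `v`. -/
noncomputable def chain (T : ITree) (v : ℕ) : Finset ℕ :=
  T.verts.filter (fun a => Ancestor T a v)

/-- The number of sons of the vertex `i` in `T`. -/
noncomputable def sons (T : ITree) (i : ℕ) : ℕ :=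
  (T.verts.filter (fun v => v ≠ i ∧ T.parent v = i)).card

/-- `R = splice(T₁, v₁; T₂, v₂)`: the increasing tree on the union of the
vertex sets obtained by merging the chain from the root of `T₁` to `v₁` with
the chain from the root of `T₂` to `v₂` into a single increasing chain
(each chain vertex having as parent its predecessor in the merged chain),
all other vertices keeping their parent.  This is exactly the interleaving of
the `v₁`-decomposition of `T₁` and the `v₂`-decomposition of `T₂` so that the
roots along the resulting chain increase. -/
def IsSplice (T₁ : ITree) (v₁ : ℕ) (T₂ : ITree) (v₂ : ℕ) (R : ITree) : Prop :=
  R.verts = T₁.verts ∪ T₂.verts ∧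
  (∀ w ∈ T₁.verts, w ∉ chain T₁ v₁ ∪ chain T₂ v₂ → R.parent w = T₁.parent w) ∧
  (∀ w ∈ T₂.verts, w ∉ chain T₁ v₁ ∪ chain T₂ v₂ → R.parent w = T₂.parent w) ∧
  (∀ w ∈ chain T₁ v₁ ∪ chain T₂ v₂,
    ∀ h : ((chain T₁ v₁ ∪ chain T₂ v₂).filter (· < w)).Nonempty,
      R.parent w = ((chain T₁ v₁ ∪ chain T₂ v₂).filter (· < w)).max' h)

/-- `π` is a set partition of a set of positive integers: its blocks are
nonempty, consist of positive integers, and are pairwise disjoint. -/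
def IsPartition (π : Finset (Finset ℕ)) : Prop :=
  (∀ B ∈ π, B.Nonempty) ∧ (∀ B ∈ π, ∀ b ∈ B, 0 < b) ∧
    (∀ B ∈ π, ∀ B' ∈ π, B ≠ B' → Disjoint B B')

/-- `T` is a `π`-increasing tree: its vertex set is a union of blocks of `π`,
and every block contained in the vertex set forms a chain of ancestors in `T`
(for `i < j` in the same block, `i` is an ancestor of `j`). -/
def PiIncreasing (π : Finset (Finset ℕ)) (T : ITree) : Prop :=
  (∀ v ∈ T.verts, ∃ B ∈ π, v ∈ B ∧ B ⊆ T.verts) ∧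
  (∀ B ∈ π, B ⊆ T.verts → ∀ i ∈ B, ∀ j ∈ B, i ≤ j → Ancestor T i j)

/-- The edge relation of the `v`-dependence graph `G_v(T)` (on the blocks of
`π` contained in `V(T)`): there is an edge from `B` to `B'` when the maximum
`μ` of `B` does not lie on the chain from the root of `T` to `v`, and the
piece of the `v`-decomposition of `T` containing `μ` (as a nonroot vertex) is
rooted at a vertex `a ∈ B'`; the root `a` of that piece is the largest
ancestor of `v` which is also an ancestor of `μ`. -/
def DepEdge (π : Finset (Finset ℕ)) (T : ITree) (v : ℕ) (B B' : Finset ℕ) : Prop :=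
  B ∈ π ∧ B' ∈ π ∧ B ⊆ T.verts ∧ B' ⊆ T.verts ∧
  ∃ hB : B.Nonempty, ¬ Ancestor T (B.max' hB) v ∧
    ∃ a ∈ B', Ancestor T a v ∧ Ancestor T a (B.max' hB) ∧
      ∀ w, Ancestor T w v → Ancestor T w (B.max' hB) → w ≤ a

/-- The `v`-dependence graph `G_v(T)` is connected: any two blocks of `π`
contained in `V(T)` are related by the equivalence closure of the edge
relation. -/
def DepConnected (π : Finset (Finset ℕ)) (T : ITree) (v : ℕ) : Prop :=
  ∀ B ∈ π, B ⊆ T.verts → ∀ B' ∈ π, B' ⊆ T.verts →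
    Relation.EqvGen (DepEdge π T v) B B'

/-!
Let `c` be the smallest ancestor of `M` other than the root `1`, i.e. the son of the root on the
path to `M`, and call a block *below `c`* (`MaxDescendant T c B`) if its maximum lies in the
subtree rooted at `c`. An edge `B → B'` of `G_M(T)` leads to the block `B'` of the root `a` of the
piece containing `max B`. If `B` is below `c` then so is `a`, hence also `max B'`; conversely, if
`B'` is below `c` then `a ≠ 1` because `{1}` is a block, so `a` and hence `max B` are below `c`.
Thus being below `c` is constant on the components of `G_M(T)`; the block of `M` is below `c`,
while `{1}` is not.
-/

namespace ITree

variable {T : ITree} {v : ℕ}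

theorem parent_mem (hv : v ∈ T.verts) : T.parent v ∈ T.verts := by
  by_cases h : ∀ u ∈ T.verts, v ≤ u
  · rwa [T.parent_root v hv h]
  · exact (T.parent_lt v hv h).1

theorem parent_le (hv : v ∈ T.verts) : T.parent v ≤ v := by
  by_cases h : ∀ u ∈ T.verts, v ≤ u
  · rw [T.parent_root v hv h]
  · exact (T.parent_lt v hv h).2.le

theorem iterate_parent_mem (k : ℕ) (hv : v ∈ T.verts) : T.parent^[k] v ∈ T.verts := by
  induction k with
  | zero => exact hv
  | succ k ih =>
    rw [Function.iterate_succ_apply']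
    exact parent_mem ih

theorem iterate_parent_le (k : ℕ) (hv : v ∈ T.verts) : T.parent^[k] v ≤ v := by
  induction k with
  | zero => exact le_rfl
  | succ k ih =>
    rw [Function.iterate_succ_apply']
    exact (parent_le (iterate_parent_mem k hv)).trans ih

end ITree

namespace Ancestor

variable {T : ITree} {a b v : ℕ}

theorem refl (v : ℕ) : Ancestor T v v := ⟨0, rfl⟩

theorem trans (hab : Ancestor T a b) (hbv : Ancestor T b v) : Ancestor T a v := by
  obtain ⟨k, rfl⟩ := hab
  obtain ⟨l, rfl⟩ := hbv
  exact ⟨k + l, Function.iterate_add_apply _ _ _ _⟩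

theorem mem (h : Ancestor T a v) (hv : v ∈ T.verts) : a ∈ T.verts := by
  obtain ⟨k, rfl⟩ := h
  exact T.iterate_parent_mem k hv

theorem le (h : Ancestor T a v) (hv : v ∈ T.verts) : a ≤ v := by
  obtain ⟨k, rfl⟩ := h
  exact T.iterate_parent_le k hv

theorem total (ha : Ancestor T a v) (hb : Ancestor T b v) : Ancestor T a b ∨ Ancestor T b a := by
  obtain ⟨k, rfl⟩ := ha
  obtain ⟨l, rfl⟩ := hb
  rcases le_total k l with hkl | hlk
  · exact Or.inr ⟨l - k, by rw [← Function.iterate_add_apply, Nat.sub_add_cancel hkl]⟩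
  · exact Or.inl ⟨k - l, by rw [← Function.iterate_add_apply, Nat.sub_add_cancel hlk]⟩

theorem of_le (hv : v ∈ T.verts) (ha : Ancestor T a v) (hb : Ancestor T b v) (hab : a ≤ b) :
    Ancestor T a b := by
  rcases ha.total hb with h | h
  · exact h
  · rw [le_antisymm hab (h.le (ha.mem hv))]
    exact .refl b

end Ancestor

theorem IsPartition.eq_of_mem {π : Finset (Finset ℕ)} (hπ : IsPartition π) {B B' : Finset ℕ}
    (hB : B ∈ π) (hB' : B' ∈ π) {x : ℕ} (hxB : x ∈ B) (hxB' : x ∈ B') : B = B' := by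
  by_contra hne
  exact Finset.disjoint_left.mp (hπ.2.2 B hB B' hB' hne) hxB hxB'

theorem PiIncreasing.subset_verts_of_mem {π : Finset (Finset ℕ)} {T : ITree}
    (hT : PiIncreasing π T) (hπ : IsPartition π) {v : ℕ} (hv : v ∈ T.verts)
    {B : Finset ℕ} (hB : B ∈ π) (hvB : v ∈ B) : B ⊆ T.verts := by
  obtain ⟨B₀, hB₀, hvB₀, hB₀T⟩ := hT.1 v hv
  rwa [hπ.eq_of_mem hB hB₀ hvB hvB₀]

def MaxDescendant (T : ITree) (c : ℕ) (B : Finset ℕ) : Prop :=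
  ∀ hB : B.Nonempty, Ancestor T c (B.max' hB)

section Dependence

variable {π : Finset (Finset ℕ)} {T : ITree} {v c : ℕ} {B B' : Finset ℕ}

theorem maxDescendant_iff_of_depEdge (hπ : IsPartition π) (h1π : ({1} : Finset ℕ) ∈ π)
    (hT : PiIncreasing π T) (hv : v ∈ T.verts) (hcv : Ancestor T c v) (h1c : 1 < c)
    (hcmin : ∀ a, Ancestor T a v → 1 < a → c ≤ a) (hE : DepEdge π T v B B') :
    MaxDescendant T c B ↔ MaxDescendant T c B' := by
  obtain ⟨-, hB'π, -, hB'T, hB, -, a, haB', hav, haμ, hamax⟩ := hE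
  have haμ' (hB' : B'.Nonempty) : Ancestor T a (B'.max' hB') :=
    hT.2 B' hB'π hB'T a haB' _ (B'.max'_mem hB') (B'.le_max' a haB')
  constructor
  · intro hcB hB'
    have hca : c ≤ a := hamax c hcv (hcB hB)
    exact (hcv.of_le hv hav hca).trans (haμ' hB')
  · intro hcB' _
    by_cases hca : c ≤ a
    · exact (hcv.of_le hv hav hca).trans haμ
    · exfalso
      have ha1 : a = 1 := by
        have := hπ.2.1 B' hB'π a haB'
        have := mt (hcmin a hav) hca
        omega
      subst ha1
      have hB'1 : B' = {1} := hπ.eq_of_mem hB'π h1π haB' (Finset.mem_singleton_self 1)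
      subst hB'1
      have hc1 : Ancestor T c 1 := by simpa using hcB' (Finset.singleton_nonempty 1)
      exact h1c.not_ge (hc1.le (hB'T haB'))

theorem maxDescendant_iff_of_eqvGen (hπ : IsPartition π) (h1π : ({1} : Finset ℕ) ∈ π)
    (hT : PiIncreasing π T) (hv : v ∈ T.verts) (hcv : Ancestor T c v) (h1c : 1 < c)
    (hcmin : ∀ a, Ancestor T a v → 1 < a → c ≤ a) (h : Relation.EqvGen (DepEdge π T v) B B') :
    MaxDescendant T c B ↔ MaxDescendant T c B' :=
  have hequiv : Equivalence fun B B' : Finset ℕ => MaxDescendant T c B ↔ MaxDescendant T c B' :=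
    ⟨fun _ => Iff.rfl, Iff.symm, Iff.trans⟩
  hequiv.eqvGen_iff.1 <| h.mono fun _ _ =>
    maxDescendant_iff_of_depEdge hπ h1π hT hv hcv h1c hcmin

end Dependence

/-- **Proposition 3.7 of Féray–Goulden–Lascoux.**  Let `π` be a partition of a
set of positive integers having `{1}` as a block, and let `T` be a
`π`-increasing tree whose vertex set contains `1` and at least one other
element, with maximum vertex `M`.  Then the blocks `{1}` and `π^M` (the block
containing `M`) lie in different connected components of the `M`-dependence
graph `G_M(T)`; in particular `T` is reducible. -/
theorem tree_containing_one_is_reducible (π : Finset (Finset ℕ)) (T : ITree)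
    (hπ : IsPartition π) (h1π : ({1} : Finset ℕ) ∈ π)
    (hT : PiIncreasing π T) (h1 : 1 ∈ T.verts)
    (hcard : ∃ v ∈ T.verts, v ≠ 1)
    (M : ℕ) (hM : M ∈ T.verts) (hMmax : ∀ u ∈ T.verts, u ≤ M) :
    (∀ BM ∈ π, M ∈ BM →
      ¬ Relation.EqvGen (DepEdge π T M) ({1} : Finset ℕ) BM) ∧
    ¬ DepConnected π T M := by
  obtain ⟨v₀, hv₀, hv₀1⟩ := hcard
  have h1M : 1 < M := by
    have := T.pos v₀ hv₀
    have := hMmax v₀ hv₀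
    omega
  have hc : ∃ c, Ancestor T c M ∧ 1 < c := ⟨M, .refl M, h1M⟩
  obtain ⟨c, ⟨hcM, h1c⟩, hcmin⟩ :
      ∃ c, (Ancestor T c M ∧ 1 < c) ∧ ∀ a, Ancestor T a M → 1 < a → c ≤ a :=
    ⟨Nat.find hc, Nat.find_spec hc, fun a haM h1a => Nat.find_min' hc ⟨haM, h1a⟩⟩
  have hnot1 : ¬ MaxDescendant T c {1} := fun h =>
    h1c.not_ge ((by simpa using h (Finset.singleton_nonempty 1) : Ancestor T c 1).le h1)
  have hsep (BM : Finset ℕ) (hBM : BM ∈ π) (hMBM : M ∈ BM) :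
      ¬ Relation.EqvGen (DepEdge π T M) {1} BM := by
    intro hconn
    have hBMT := hT.subset_verts_of_mem hπ hM hBM hMBM
    have hcBM : MaxDescendant T c BM := fun hne => by
      rwa [le_antisymm (BM.max'_le hne _ fun x hx => hMmax x (hBMT hx)) (BM.le_max' M hMBM)]
    exact hnot1 ((maxDescendant_iff_of_eqvGen hπ h1π hT hM hcM h1c hcmin hconn).2 hcBM)
  refine ⟨hsep, fun hconn => ?_⟩
  obtain ⟨BM, hBM, hMBM, hBMT⟩ := hT.1 M hM
  exact hsep BM hBM hMBM (hconn {1} h1π (Finset.singleton_subset_iff.2 h1) BM hBM hBMT)
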